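/- For every i ∈ ℤ_{≥0}, the Bernoulli-Carlitz number BC_{q^i − 1} satisfies BC_{q^i − 1} = (−1)^i D_i / L_i^2 = Π(q^i − 1)/L_i; in particular BC_{q^i − 1} ≠ 0 and BC_{q^i − 1}/Π(q^i − 1) = 1/L_i. -/

import Mathlib

/-!
Let `g = z / e_C(z)` and let `c_m` be its coefficient of `z^(q^m - 1)`. All terms `z^n` of
`e_C(z)/z - 1` have `q ∣ n + 1`, so in the geometric series for `g` only the powers
`(1 - e_C(z)/z)^(q s)` reach `z^(q k)`; hence `coeff_{qk} g = (coeff_k g)^q`. Comparing the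
coefficients of `z^(q^m)` in `e_C · g = z` then gives `∑_{i ≤ m} c_{m-i}^(q^i) / D_i = 0` for
`m ≥ 1`. The Lagrange partial-fraction identity at the nodes `θ^(q^j)`, `j ≤ m`, shows that
`1/L_m` satisfies the same triangular recursion; as `c_0 = 1 = 1/L_0`, we get `c_m = 1/L_m`.
Finally every base-`q` digit of `q^i - 1` is `q - 1`, so `Π(q^i - 1) = ∏_{j<i} D_j^(q-1)`, and
`D_{i+1} = (θ^(q^(i+1)) - θ) D_i^q` gives `D_i = (-1)^i L_i Π(q^i - 1)`.
-/

open Polynomial PowerSeries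

noncomputable section

namespace Carlitz

variable (F : Type) [Field F] [Fintype F]

/-- `q`, the cardinality of the finite field of constants `𝔽_q`. -/
def q : ℕ := Fintype.card F

/-- The Carlitz polynomial `D_i = ∏_{j=0}^{i-1} (θ^{q^i} - θ^{q^j})` (with `D_0 = 1`). -/
def Dpoly (i : ℕ) : Polynomial F :=
  ∏ j ∈ Finset.range i, (Polynomial.X ^ (q F) ^ i - Polynomial.X ^ (q F) ^ j)

/-- The Carlitz polynomial `L_i = ∏_{j=1}^{i} (θ - θ^{q^j})` (with `L_0 = 1`). -/
def Lpoly (i : ℕ) : Polynomial F :=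
  ∏ j ∈ Finset.range i, (Polynomial.X - Polynomial.X ^ (q F) ^ (j + 1))

/-- The Carlitz factorial `Π(n) = ∏_i D_i^{n_i}` where `n = Σ_i n_i q^i` is the base-`q`
expansion of `n`.  This also equals the Carlitz gamma `Γ_{n+1}`. -/
def cfact (n : ℕ) : Polynomial F :=
  ∏ i ∈ Finset.range (Nat.digits (q F) n).length,
    (Dpoly F i) ^ ((Nat.digits (q F) n).getD i 0)

/-- The inclusion `A = 𝔽_q[θ] → k = 𝔽_q(θ)`. -/
def toK : Polynomial F →+* RatFunc F := algebraMap _ _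

/-- The Carlitz exponential `e_C(z) = Σ_{i≥0} z^{q^i}/D_i` as a power series over `k`. -/
def eC : PowerSeries (RatFunc F) :=
  PowerSeries.mk fun n => ∑ i ∈ Finset.range (n + 1),
    if (q F) ^ i = n then (toK F (Dpoly F i))⁻¹ else 0

/-- The Bernoulli-Carlitz numbers `BC_n`, defined by `Σ_n BC_n z^n/Π(n) = z/e_C(z)`:
since `e_C(z) = z · u(z)` where `u(z) = Σ_m (coeff_{m+1} e_C) z^m` has constant term `1`,
we have `z/e_C(z) = u(z)⁻¹` and `BC_n = Π(n) · coeff_n (u⁻¹)`. -/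
def BCnum (n : ℕ) : RatFunc F :=
  toK F (cfact F n) *
    PowerSeries.coeff n
      (PowerSeries.mk fun m => PowerSeries.coeff (m + 1) (eC F))⁻¹

/-- The Stirling-Carlitz numbers of the second kind `{n brace m}_C`, defined by
`Σ_n {n brace m}_C z^n/Π(n) = e_C(z)^m/Π(m)`, i.e. `{n brace m}_C = Π(n)·coeff_n(e_C^m)/Π(m)`. -/
def StC (n m : ℕ) : RatFunc F :=
  toK F (cfact F n) * PowerSeries.coeff n (eC F ^ m) * (toK F (cfact F m))⁻¹

/-- The (finite) set of strictly decreasing tuples `i : Fin r → ℕ`,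
`i_1 > i_2 > ⋯ > i_r ≥ 0`, with all values `< N`. -/
def decTuples (r N : ℕ) : Finset (Fin r → ℕ) :=
  (Finset.univ.filter fun i : Fin r → Fin N => ∀ a b : Fin r, a < b → i b < i a).image
    fun i l => (i l : ℕ)

/-- The leading (largest) entry `i_1` of a (strictly decreasing) tuple. -/
def lead {r : ℕ} (i : Fin r → ℕ) : ℕ := if h : 0 < r then i ⟨0, h⟩ else 0

/-- The multi-poly-Bernoulli-Carlitz numbers `BC_n^{s,j}`, defined by the generating series
`Σ_n BC_n^{s,j} z^n/Π(n) = Li_s(e_C(z)·u_{1 j_1}, u_{2 j_2}, …, u_{r j_r})/e_C(z)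
 = Σ_{i_1 > ⋯ > i_r ≥ 0} e_C(z)^{q^{i_1}-1} ∏_l u_{l j_l}^{q^{i_l}}/L_{i_l}^{s_l}`,
written out coefficientwise (here `u l` is the datum `u_{l j_l} ∈ A`; the coefficient of
`z^n` in `e_C^{q^{i_1}-1}` vanishes whenever `i_1 > n`, so the sum below is complete). -/
def MPBC {r : ℕ} (s : Fin r → ℕ) (u : Fin r → Polynomial F) (n : ℕ) : RatFunc F :=
  toK F (cfact F n) * ∑ i ∈ decTuples r (n + 1),
    PowerSeries.coeff n (eC F ^ ((q F) ^ lead i - 1)) *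
      ∏ l, (toK F (u l)) ^ ((q F) ^ (i l)) * ((toK F (Lpoly F (i l))) ^ (s l))⁻¹

/-- The two-variable rational function field `K₂ = 𝔽_q(θ)(t)`. -/
abbrev K2 := RatFunc (RatFunc F)

/-- The inclusion `k = 𝔽_q(θ) → 𝔽_q(θ)(t)`. -/
def liftK : RatFunc F →+* K2 F :=
  (algebraMap (Polynomial (RatFunc F)) (K2 F)).comp Polynomial.C

/-- The inclusion `A = 𝔽_q[θ] → 𝔽_q(θ)(t)`. -/
def liftA : Polynomial F →+* K2 F := (liftK F).comp (toK F)

/-- The inclusion of constants `𝔽_q → 𝔽_q(θ)(t)`. -/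
def liftF : F →+* K2 F := (liftA F).comp Polynomial.C

/-- Substitution `θ ↦ t` on a polynomial `P ∈ 𝔽_q[θ]`, landing in `𝔽_q(θ)(t)`
(where `t` is the outer variable `RatFunc.X`); e.g. `D_i|_{θ=t}`. -/
def subT (P : Polynomial F) : K2 F :=
  Polynomial.eval (RatFunc.X : K2 F) (P.map (liftF F))

/-- Evaluation of a polynomial in `A[t]` in `𝔽_q(θ)(t)` (coefficients included via
`A → 𝔽_q(θ)`, the variable `t` sent to the outer `RatFunc.X`). -/
def evalAT (h : Polynomial (Polynomial F)) : K2 F :=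
  Polynomial.eval (RatFunc.X : K2 F) (h.map (liftA F))

/-- The power series `1 - Σ_{i≥0} (∏_{j=1}^{i}(t^{q^i} - θ^{q^j})/D_i|_{θ=t}) x^{q^i}`
appearing in the definition of the Anderson-Thakur polynomials. -/
def ATgen : PowerSeries (K2 F) :=
  1 - PowerSeries.mk fun m => ∑ i ∈ Finset.range (m + 1),
    if (q F) ^ i = m then
      (∏ j ∈ Finset.range i,
        ((RatFunc.X : K2 F) ^ (q F) ^ i - (liftK F RatFunc.X) ^ (q F) ^ (j + 1))) *
        (subT F (Dpoly F i))⁻¹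
    else 0

/-- `H : ℕ → A[t]` is the family of Anderson-Thakur polynomials iff
`{1 - Σ_i (∏_{j=1}^{i}(t^{q^i} - θ^{q^j})/D_i|_{θ=t}) x^{q^i}}⁻¹ = Σ_n (H_n/Γ_{n+1}|_{θ=t}) x^n`,
i.e. the product of the left-hand factor with the right-hand series equals `1`. -/
def IsATFamily (H : ℕ → Polynomial (Polynomial F)) : Prop :=
  ATgen F * (PowerSeries.mk fun n => evalAT F (H n) * (subT F (cfact F n))⁻¹) = 1

/-- Reduction of a rational function `x ∈ k` whose denominator is coprime to `℘`
into `A/℘A`: reduce numerator and denominator (in lowest terms) and divide. -/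
def redmod (℘ : Polynomial F) (x : RatFunc F) : Polynomial F ⧸ Ideal.span {℘} :=
  Ideal.Quotient.mk (Ideal.span {℘}) x.num *
    Ring.inverse (Ideal.Quotient.mk (Ideal.span {℘}) x.denom)

/-- The finite multiple zeta value `ζ_{𝒜_k}(s)_℘ ∈ A/℘A`: the sum of
`1/(a_1^{s_1} ⋯ a_r^{s_r})` over monic `a_1, …, a_r ∈ A` with
`deg ℘ > deg a_1 > ⋯ > deg a_r ≥ 0`. -/
def finMZV (℘ : Polynomial F) {r : ℕ} (s : Fin r → ℕ) : Polynomial F ⧸ Ideal.span {℘} :=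
  ∑ᶠ a ∈ {a : Fin r → Polynomial F |
      (∀ l, (a l).Monic) ∧ (StrictAnti fun l => (a l).natDegree) ∧
        ∀ l, (a l).natDegree < ℘.natDegree},
    ∏ l, Ring.inverse (Ideal.Quotient.mk (Ideal.span {℘}) (a l) ^ (s l))

/-- The finite Carlitz multiple polylogarithm
`Li_{𝒜_k,s}(u_1, …, u_r)_℘ = Σ_{deg ℘ > i_1 > ⋯ > i_r ≥ 0} u_1^{q^{i_1}} ⋯ u_r^{q^{i_r}}
/ (L_{i_1}^{s_1} ⋯ L_{i_r}^{s_r}) ∈ A/℘A`. -/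
def finCMPL (℘ : Polynomial F) {r : ℕ} (s : Fin r → ℕ) (u : Fin r → Polynomial F) :
    Polynomial F ⧸ Ideal.span {℘} :=
  ∑ i ∈ decTuples r ℘.natDegree,
    ∏ l, Ideal.Quotient.mk (Ideal.span {℘}) (u l) ^ ((q F) ^ (i l)) *
      Ring.inverse (Ideal.Quotient.mk (Ideal.span {℘}) (Lpoly F (i l)) ^ (s l))

theorem _root_.PowerSeries.coeff_mul_pow_expChar_pow {R : Type*} [CommRing R] (p : ℕ)
    [ExpChar R p] (n k : ℕ) (φ : R⟦X⟧) :
    PowerSeries.coeff (p ^ n * k) (φ ^ p ^ n) = PowerSeries.coeff k φ ^ p ^ n := by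
  rw [← MvPowerSeries.map_iterateFrobenius_expand p (expChar_ne_zero R p) φ n]
  change MvPowerSeries.coeff _ _ = _
  rw [MvPowerSeries.coeff_map, ← smul_eq_mul, ← Finsupp.smul_single,
    MvPowerSeries.coeff_expand_smul]
  rfl

theorem _root_.PowerSeries.coeff_pow_eq_zero_of_not_dvd_add {R : Type*} [CommSemiring R]
    {d : ℕ} {x : R⟦X⟧} (hx : ∀ m, ¬ d ∣ m + 1 → PowerSeries.coeff m x = 0) (r : ℕ) {m : ℕ}
    (h : ¬ d ∣ m + r) : PowerSeries.coeff m (x ^ r) = 0 := by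
  induction r generalizing m with
  | zero =>
    rw [pow_zero, PowerSeries.coeff_one, if_neg]
    rintro rfl
    exact h (dvd_zero d)
  | succ r ih =>
    rw [pow_succ, PowerSeries.coeff_mul]
    refine Finset.sum_eq_zero fun ab hab => ?_
    rw [Finset.HasAntidiagonal.mem_antidiagonal] at hab
    by_cases h₁ : d ∣ ab.1 + r
    · have h₂ : ¬ d ∣ ab.2 + 1 := fun h₂ =>
        h (by rw [← hab, show ab.1 + ab.2 + (r + 1) = ab.1 + r + (ab.2 + 1) by ring]
              exact dvd_add h₁ h₂)
      rw [hx _ h₂, mul_zero]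
    · rw [ih h₁, zero_mul]

theorem _root_.PowerSeries.coeff_inv_one_sub {K : Type*} [Field K] {x : K⟦X⟧}
    (hx : PowerSeries.constantCoeff x = 0) {n N : ℕ} (hnN : n ≤ N) :
    PowerSeries.coeff n (1 - x)⁻¹ = ∑ r ∈ Finset.range (N + 1), PowerSeries.coeff n (x ^ r) := by
  have hunit : PowerSeries.constantCoeff (1 - x) ≠ 0 := by simp [hx]
  have hgeom : ∑ r ∈ Finset.range (N + 1), x ^ r = (1 - x)⁻¹ - (1 - x)⁻¹ * x ^ (N + 1) := by
    rw [← mul_one_sub, ← mul_neg_geom_sum, ← mul_assoc, PowerSeries.inv_mul_cancel _ hunit,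
      one_mul]
  have htail : PowerSeries.coeff n ((1 - x)⁻¹ * x ^ (N + 1)) = 0 := by
    have hdvd : PowerSeries.X ^ (N + 1) ∣ (1 - x)⁻¹ * x ^ (N + 1) :=
      (pow_dvd_pow_of_dvd (PowerSeries.X_dvd_iff.mpr hx) _).mul_left _
    exact PowerSeries.X_pow_dvd_iff.mp hdvd n (by omega)
  rw [← map_sum, hgeom, map_sub, htail, sub_zero]

theorem _root_.Lagrange.sum_inv_prod_sub_eq_zero {K ι : Type*} [Field K] [DecidableEq ι]
    {s : Finset ι} {v : ι → K} (hvs : Set.InjOn v s) (hs : 2 ≤ s.card) :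
    ∑ i ∈ s, (∏ j ∈ s.erase i, (v i - v j))⁻¹ = 0 := by
  have h := Lagrange.coeff_eq_sum hvs (P := 1)
    (by rw [Polynomial.degree_one]; exact_mod_cast (by omega : 0 < s.card))
  rw [Polynomial.coeff_one, if_neg (by omega)] at h
  simpa using h.symm

theorem _root_.Nat.digits_pow_sub_one {b : ℕ} (hb : 1 < b) (i : ℕ) :
    Nat.digits b (b ^ i - 1) = List.replicate i (b - 1) := by
  induction i with
  | zero => simp
  | succ i ih =>
    have hpos : 1 ≤ b ^ i := Nat.one_le_pow _ _ (by omega)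
    have hsplit : b ^ (i + 1) - 1 = (b - 1) + b * (b ^ i - 1) := by
      rw [pow_succ', Nat.mul_sub_one]
      have : b ≤ b * b ^ i := Nat.le_mul_of_pos_right b hpos
      omega
    rw [hsplit, Nat.digits_add b hb _ _ (by omega) (Or.inl (by omega)), ih,
      List.replicate_succ]

theorem eq_of_sum_range_mul_pow_eq_zero {R : Type*} [CommRing R] {w : ℕ → R} (hw : w 0 = 1)
    {e : ℕ → ℕ} (he : e 0 = 1) {a b : ℕ → R} (h0 : a 0 = b 0)
    (ha : ∀ m, 0 < m → ∑ i ∈ Finset.range (m + 1), w i * a (m - i) ^ e i = 0)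
    (hb : ∀ m, 0 < m → ∑ i ∈ Finset.range (m + 1), w i * b (m - i) ^ e i = 0) : a = b := by
  funext m
  induction m using Nat.strong_induction_on with
  | _ m ih =>
    rcases Nat.eq_zero_or_pos m with rfl | hm
    · exact h0
    have hlower : ∀ i ∈ Finset.range m,
        w (i + 1) * a (m - (i + 1)) ^ e (i + 1) = w (i + 1) * b (m - (i + 1)) ^ e (i + 1) :=
      fun i hi => by rw [ih _ (by simp at hi; omega)]
    have := (ha m hm).trans (hb m hm).symm
    rwa [Finset.sum_range_succ', Finset.sum_range_succ', Finset.sum_congr rfl hlower,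
      add_left_cancel_iff, hw, he, Nat.sub_zero, pow_one, pow_one, one_mul, one_mul] at this

lemma one_lt_q : 1 < q F := Fintype.one_lt_card

section Frobenius

variable {R : Type*} [CommRing R] [Algebra F R]

lemma sum_pow_q {ι : Type*} (s : Finset ι) (f : ι → R) :
    (∑ i ∈ s, f i) ^ q F = ∑ i ∈ s, f i ^ q F :=
  map_sum (FiniteField.frobeniusAlgHom F R) f s

lemma sub_pow_q (x y : R) : (x - y) ^ q F = x ^ q F - y ^ q F :=
  map_sub (FiniteField.frobeniusAlgHom F R) x y

lemma sub_pow_q_pow (x y : R) (t : ℕ) : (x - y) ^ q F ^ t = x ^ q F ^ t - y ^ q F ^ t := by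
  induction t with
  | zero => simp
  | succ t ih => simp only [pow_succ, pow_mul, ih, sub_pow_q]

lemma coeff_q_mul_pow_q (φ : R⟦X⟧) (k : ℕ) :
    PowerSeries.coeff (q F * k) (φ ^ q F) = PowerSeries.coeff k φ ^ q F := by
  nontriviality R
  obtain ⟨p, _, n, hp, hcard⟩ := FiniteField.card' F
  have : CharP R p := charP_of_injective_algebraMap' F p
  have : ExpChar R p := .prime hp
  rw [q, hcard]
  exact PowerSeries.coeff_mul_pow_expChar_pow p n k φ

end Frobenius

lemma coeff_q_mul_inv_one_sub {K : Type*} [Field K] [Algebra F K] {x : K⟦X⟧}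
    (hx : ∀ m, ¬ q F ∣ m + 1 → PowerSeries.coeff m x = 0) (k : ℕ) :
    PowerSeries.coeff (q F * k) (1 - x)⁻¹ = PowerSeries.coeff k (1 - x)⁻¹ ^ q F := by
  have hq := one_lt_q F
  have hx0 : PowerSeries.constantCoeff x = 0 := by
    rw [← PowerSeries.coeff_zero_eq_constantCoeff_apply]
    exact hx 0 (by rw [zero_add, Nat.dvd_one]; omega)
  have hsub : (Finset.range (k + 1)).image (q F * ·) ⊆ Finset.range (q F * k + 1) := by
    intro r hr
    simp only [Finset.mem_image, Finset.mem_range] at hr ⊢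
    obtain ⟨s, hs, rfl⟩ := hr
    have := Nat.mul_le_mul_left (q F) (Nat.le_of_lt_succ hs)
    omega
  have hoff : ∀ r ∈ Finset.range (q F * k + 1), r ∉ (Finset.range (k + 1)).image (q F * ·) →
      PowerSeries.coeff (q F * k) (x ^ r) = 0 := by
    intro r hr hr'
    refine PowerSeries.coeff_pow_eq_zero_of_not_dvd_add hx r fun hdvd => hr' ?_
    obtain ⟨s, rfl⟩ := (Nat.dvd_add_right (dvd_mul_right _ k)).mp hdvd
    simp only [Finset.mem_image, Finset.mem_range] at hr ⊢
    exact ⟨s, Nat.lt_succ_of_le (Nat.le_of_mul_le_mul_left (c := q F) (by omega) (by omega)), rfl⟩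
  rw [PowerSeries.coeff_inv_one_sub hx0 (le_refl (q F * k)),
    PowerSeries.coeff_inv_one_sub hx0 (le_refl k), ← Finset.sum_subset hsub hoff,
    Finset.sum_image fun a _ b _ h => Nat.eq_of_mul_eq_mul_left (by omega) h, sum_pow_q]
  refine Finset.sum_congr rfl fun s _ => ?_
  rw [mul_comm (q F) s, pow_mul, coeff_q_mul_pow_q]

lemma X_pow_q_pow_injective : Function.Injective fun t : ℕ => (Polynomial.X : F[X]) ^ q F ^ t :=
  fun a b h => Nat.pow_right_injective (one_lt_q F) <| by
    simpa only [Polynomial.natDegree_X_pow] using congrArg Polynomial.natDegree h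

lemma Dpoly_ne_zero (i : ℕ) : Dpoly F i ≠ 0 :=
  Finset.prod_ne_zero_iff.mpr fun _ hj => sub_ne_zero.mpr fun h =>
    (Finset.mem_range.mp hj).ne' (X_pow_q_pow_injective F h)

lemma Dpoly_succ (i : ℕ) :
    Dpoly F (i + 1) = (Polynomial.X ^ q F ^ (i + 1) - Polynomial.X) * Dpoly F i ^ q F := by
  rw [Dpoly, Finset.prod_range_succ', pow_zero, pow_one, mul_comm, Dpoly, ← Finset.prod_pow]
  congr 1
  refine Finset.prod_congr rfl fun j _ => ?_
  rw [sub_pow_q, ← pow_mul, ← pow_mul, ← pow_succ, ← pow_succ]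

lemma cfact_q_pow_sub_one (i : ℕ) :
    cfact F (q F ^ i - 1) = ∏ j ∈ Finset.range i, Dpoly F j ^ (q F - 1) := by
  rw [cfact, Nat.digits_pow_sub_one (one_lt_q F), List.length_replicate]
  refine Finset.prod_congr rfl fun j hj => ?_
  rw [List.getD_eq_getElem?_getD, List.getElem?_replicate, if_pos (Finset.mem_range.mp hj),
    Option.getD_some]

lemma Dpoly_eq_neg_one_pow_mul (i : ℕ) :
    Dpoly F i = (-1) ^ i * Lpoly F i * cfact F (q F ^ i - 1) := by
  rw [cfact_q_pow_sub_one]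
  induction i with
  | zero => simp [Dpoly, Lpoly]
  | succ i ih =>
    have hq : q F = q F - 1 + 1 := by have := one_lt_q F; omega
    rw [Dpoly_succ, Lpoly, Finset.prod_range_succ, ← Lpoly, Finset.prod_range_succ]
    nth_rw 2 [hq]
    rw [pow_succ, ih]
    ring

lemma prod_erase_X_pow_sub {m t : ℕ} (ht : t ≤ m) :
    ∏ j ∈ (Finset.range (m + 1)).erase t,
        ((Polynomial.X : F[X]) ^ q F ^ t - Polynomial.X ^ q F ^ j) =
      Dpoly F t * Lpoly F (m - t) ^ q F ^ t := by
  have hsplit : (Finset.range (m + 1)).erase t = Finset.range t ∪ Finset.Ico (t + 1) (m + 1) := by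
    ext j
    simp only [Finset.mem_erase, Finset.mem_range, Finset.mem_union, Finset.mem_Ico]
    omega
  rw [hsplit, Finset.prod_union (Finset.disjoint_left.mpr fun j hj hj' => by
      simp only [Finset.mem_range, Finset.mem_Ico] at hj hj'; omega),
    Finset.prod_Ico_eq_prod_range, show m + 1 - (t + 1) = m - t by omega, Lpoly,
    ← Finset.prod_pow, Dpoly]
  congr 1
  refine Finset.prod_congr rfl fun j _ => ?_
  rw [sub_pow_q_pow, ← pow_mul, ← pow_add, show t + 1 + j = j + 1 + t by omega]

-- The coefficient of `z^(q^m)` in `e_C(log_C z) = z`, where `log_C z = ∑ z^(q^j) / L_j`.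
lemma sum_inv_Dpoly_mul_inv_Lpoly_pow {m : ℕ} (hm : 0 < m) :
    ∑ i ∈ Finset.range (m + 1),
      (toK F (Dpoly F i))⁻¹ * (toK F (Lpoly F (m - i)))⁻¹ ^ q F ^ i = 0 := by
  have hinj : Set.InjOn (fun t => toK F (Polynomial.X ^ q F ^ t)) ↑(Finset.range (m + 1)) :=
    ((IsFractionRing.injective F[X] (RatFunc F)).comp (X_pow_q_pow_injective F)).injOn
  have h := Lagrange.sum_inv_prod_sub_eq_zero hinj (by simp; omega)
  rw [← h]
  refine Finset.sum_congr rfl fun t ht => ?_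
  rw [inv_pow, ← mul_inv, ← map_pow, ← map_mul,
    ← prod_erase_X_pow_sub F (Finset.mem_range_succ_iff.mp ht), map_prod]
  exact congrArg _ (Finset.prod_congr rfl fun j _ => map_sub _ _ _)

lemma coeff_eC_q_pow (i : ℕ) : PowerSeries.coeff (q F ^ i) (eC F) = (toK F (Dpoly F i))⁻¹ := by
  rw [eC, PowerSeries.coeff_mk, Finset.sum_eq_single_of_mem i
    (Finset.mem_range_succ_iff.mpr (Nat.lt_pow_self (one_lt_q F)).le), if_pos rfl]
  exact fun j _ hji => if_neg ((Nat.pow_right_injective (one_lt_q F)).ne hji)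

lemma coeff_eC_of_ne_q_pow {n : ℕ} (hn : ∀ i, q F ^ i ≠ n) : PowerSeries.coeff n (eC F) = 0 := by
  rw [eC, PowerSeries.coeff_mk]
  exact Finset.sum_eq_zero fun i _ => if_neg (hn i)

lemma coeff_one_eC : PowerSeries.coeff 1 (eC F) = 1 := by
  simpa [Dpoly] using coeff_eC_q_pow F 0

/-- The generating series `z / e_C(z)` of `BC_n / Π(n)`. -/
def BCgen : (RatFunc F)⟦X⟧ := (PowerSeries.mk fun m => PowerSeries.coeff (m + 1) (eC F))⁻¹

lemma BCnum_eq (n : ℕ) : BCnum F n = toK F (cfact F n) * PowerSeries.coeff n (BCgen F) := rfl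

lemma coeff_zero_BCgen : PowerSeries.coeff 0 (BCgen F) = 1 := by
  simp [BCgen, PowerSeries.constantCoeff_inv, coeff_one_eC]

lemma eC_mul_BCgen : eC F * BCgen F = PowerSeries.X := by
  have h0 : PowerSeries.constantCoeff (eC F) = 0 := by
    rw [← PowerSeries.coeff_zero_eq_constantCoeff_apply]
    exact coeff_eC_of_ne_q_pow F fun i => (pow_pos (by have := one_lt_q F; omega) i).ne'
  have h1 : PowerSeries.constantCoeff
      (PowerSeries.mk fun m => PowerSeries.coeff (m + 1) (eC F)) ≠ 0 := by
    simp [coeff_one_eC]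
  rw [PowerSeries.eq_X_mul_shift_add_const (eC F), h0, map_zero, add_zero, BCgen, mul_assoc,
    PowerSeries.mul_inv_cancel _ h1, mul_one]

lemma coeff_q_mul_BCgen (k : ℕ) :
    PowerSeries.coeff (q F * k) (BCgen F) = PowerSeries.coeff k (BCgen F) ^ q F := by
  have hx : ∀ m, ¬ q F ∣ m + 1 →
      PowerSeries.coeff m (1 - PowerSeries.mk fun m => PowerSeries.coeff (m + 1) (eC F)) = 0 := by
    intro m hm
    rcases Nat.eq_zero_or_pos m with rfl | hm0
    · simp [coeff_one_eC]
    rw [map_sub, PowerSeries.coeff_one, if_neg hm0.ne', PowerSeries.coeff_mk, zero_sub,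
      neg_eq_zero]
    refine coeff_eC_of_ne_q_pow F fun i hi => hm ?_
    rcases Nat.eq_zero_or_pos i with rfl | hi0
    · rw [pow_zero] at hi
      omega
    · exact hi ▸ dvd_pow_self _ hi0.ne'
  have := coeff_q_mul_inv_one_sub F hx k
  rwa [sub_sub_cancel] at this

lemma coeff_q_pow_mul_BCgen (i k : ℕ) :
    PowerSeries.coeff (q F ^ i * k) (BCgen F) = PowerSeries.coeff k (BCgen F) ^ q F ^ i := by
  induction i with
  | zero => simp
  | succ i ih => rw [pow_succ', mul_assoc, coeff_q_mul_BCgen, ih, ← pow_mul, mul_comm]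

lemma sum_inv_Dpoly_mul_coeff_BCgen_pow {m : ℕ} (hm : 0 < m) :
    ∑ i ∈ Finset.range (m + 1), (toK F (Dpoly F i))⁻¹ *
      PowerSeries.coeff (q F ^ (m - i) - 1) (BCgen F) ^ q F ^ i = 0 := by
  have hq := one_lt_q F
  set pairs := (Finset.range (m + 1)).image fun i => (q F ^ i, q F ^ m - q F ^ i)
  have hpow_le : ∀ {i}, q F ^ i ≤ q F ^ m ↔ i ≤ m := Nat.pow_le_pow_iff_right hq
  have hsub : pairs ⊆ Finset.HasAntidiagonal.antidiagonal (q F ^ m) := by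
    simp only [pairs, Finset.subset_iff, Finset.mem_image, Finset.mem_range_succ_iff,
      Finset.HasAntidiagonal.mem_antidiagonal]
    rintro _ ⟨i, hi, rfl⟩
    exact Nat.add_sub_cancel' (hpow_le.mpr hi)
  have hoff : ∀ ab ∈ Finset.HasAntidiagonal.antidiagonal (q F ^ m), ab ∉ pairs →
      PowerSeries.coeff ab.1 (eC F) * PowerSeries.coeff ab.2 (BCgen F) = 0 := by
    rintro ⟨a, b⟩ hab hnot
    rw [Finset.HasAntidiagonal.mem_antidiagonal] at hab
    refine mul_eq_zero_of_left (coeff_eC_of_ne_q_pow F fun i hi => hnot ?_) _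
    dsimp only at hab hi
    simp only [pairs, Finset.mem_image, Finset.mem_range_succ_iff]
    exact ⟨i, hpow_le.mp (by omega), Prod.ext hi (by dsimp only; omega)⟩
  have hcoeff := congrArg (PowerSeries.coeff (q F ^ m)) (eC_mul_BCgen F)
  rw [PowerSeries.coeff_mul, ← Finset.sum_subset hsub hoff, Finset.sum_image fun a _ b _ h =>
      Nat.pow_right_injective hq (congrArg Prod.fst h),
    PowerSeries.coeff_X, if_neg (Nat.one_lt_pow hm.ne' hq).ne'] at hcoeff
  rw [← hcoeff]
  refine Finset.sum_congr rfl fun i hi => ?_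
  have hi : i ≤ m := Finset.mem_range_succ_iff.mp hi
  rw [coeff_eC_q_pow, ← coeff_q_pow_mul_BCgen, Nat.mul_sub_one, ← pow_add, Nat.add_sub_cancel' hi]

lemma coeff_BCgen_q_pow_sub_one (m : ℕ) :
    PowerSeries.coeff (q F ^ m - 1) (BCgen F) = (toK F (Lpoly F m))⁻¹ :=
  congrFun (eq_of_sum_range_mul_pow_eq_zero (w := fun i => (toK F (Dpoly F i))⁻¹)
    (e := (q F ^ ·)) (a := fun m => PowerSeries.coeff (q F ^ m - 1) (BCgen F))
    (b := fun m => (toK F (Lpoly F m))⁻¹) (by simp [Dpoly]) (pow_zero _)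
    (by simp [coeff_zero_BCgen, Lpoly])
    (fun _ hm => sum_inv_Dpoly_mul_coeff_BCgen_pow F hm)
    (fun _ hm => sum_inv_Dpoly_mul_inv_Lpoly_pow F hm)) m

/-- For every `i ≥ 0`, `BC_{q^i − 1} = (−1)^i D_i / L_i^2 = Π(q^i − 1)/L_i`;
in particular `BC_{q^i − 1} ≠ 0` and `BC_{q^i − 1}/Π(q^i − 1) = 1/L_i`. -/
theorem BCnum_qpow_sub_one (i : ℕ) :
    BCnum F ((q F) ^ i - 1) =
        (-1 : RatFunc F) ^ i * toK F (Dpoly F i) / (toK F (Lpoly F i)) ^ 2 ∧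
    BCnum F ((q F) ^ i - 1) =
        toK F (cfact F ((q F) ^ i - 1)) / toK F (Lpoly F i) ∧
    BCnum F ((q F) ^ i - 1) ≠ 0 ∧
    BCnum F ((q F) ^ i - 1) / toK F (cfact F ((q F) ^ i - 1)) = (toK F (Lpoly F i))⁻¹ := by
  have hBC : BCnum F (q F ^ i - 1) = toK F (cfact F (q F ^ i - 1)) / toK F (Lpoly F i) := by
    rw [BCnum_eq, coeff_BCgen_q_pow_sub_one, div_eq_mul_inv]
  have hD : toK F (Dpoly F i) =
      (-1) ^ i * (toK F (Lpoly F i) * toK F (cfact F (q F ^ i - 1))) := by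
    simp only [Dpoly_eq_neg_one_pow_mul F i, map_mul, map_pow, map_neg, map_one, mul_assoc]
  obtain ⟨hL, hfact⟩ : toK F (Lpoly F i) ≠ 0 ∧ toK F (cfact F (q F ^ i - 1)) ≠ 0 := by
    have hD0 : toK F (Dpoly F i) ≠ 0 :=
      (map_ne_zero_iff _ (IsFractionRing.injective F[X] (RatFunc F))).mpr (Dpoly_ne_zero F i)
    rw [hD] at hD0
    exact mul_ne_zero_iff.mp (right_ne_zero_of_mul hD0)
  refine ⟨?_, hBC, ?_, ?_⟩
  · rw [hBC, hD, ← mul_assoc, ← mul_pow]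
    field_simp
    simp
  · rw [hBC]
    exact div_ne_zero hfact hL
  · rw [hBC]
    field_simp

end Carlitz
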